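/- arXiv:2105.09725 — 4 statements merged into one kernel-verified Lean document; each statement's English description precedes it below -/
import Mathlib

section
/- Let p be an odd prime and let ζ ∈ ℤ_pˣ be a unit of the p-adic integers whose reduction modulo p generates the cyclic group (ℤ/pℤ)ˣ. Then the closure (with respect to the p-adic topology) of the subgroup of GL₂(ℤ_p) generated by the four matrices X = [[0,1],[1,0]], P₋ = [[1,0],[1,1]], M_ζ = [[ζ,0],[0,1]], and P_{1+p} = [[1+p,0],[0,1]] is all of GL₂(ℤ_p). -/
/-!
Over a local ring, an element of `GL₂` with a unit top-left entry has an LDU decomposition, and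
otherwise its bottom-left entry is a unit; so `GL₂` is generated by the swap `X`, the unipotents
`[1, t; 0, 1]` and the matrices `diag(u, 1)`. The closure of the given group contains `X` and
`[1, 1; 0, 1] = X P₋ X`, hence every `[1, t; 0, 1]` because `ℕ` is dense in `ℤ_p`. It also
contains `diag(u, 1)` for `u` in the closure of `⟨ζ, 1 + p⟩ ≤ ℤ_pˣ`, and that closure is everything:
modulo `p^(n+1)` the image of `1 + p` has order `p^n` and that of `ζ` has order divisible by
`p - 1`, so together they generate `(ℤ/p^(n+1))ˣ`, of order `p^n (p - 1)`.
-/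

lemma Matrix.swap_zero_one_fin_two {R : Type*} [Zero R] [One R] :
    Matrix.swap R (0 : Fin 2) 1 = !![0, 1; 1, 0] := by
  ext i j; fin_cases i <;> fin_cases j <;> simp [Matrix.swap]

namespace Matrix.GeneralLinearGroup

section Ring

variable {R : Type*} [Ring R]

theorem upperRightHom_mem_of_isClosed [TopologicalSpace R] [IsTopologicalRing R]
    (hR : DenseRange (Nat.cast : ℕ → R)) {K : Subgroup (GL (Fin 2) R)}
    (hK : IsClosed (K : Set (GL (Fin 2) R))) (h1 : upperRightHom 1 ∈ K) (t : R) :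
    upperRightHom t ∈ K :=
  hR.induction_on t (hK.preimage continuous_upperRightHom) fun n ↦ by
    simpa only [← AddChar.map_nsmul_eq_pow, nsmul_one] using K.pow_mem h1 n

def diagLeft : Rˣ →* GL (Fin 2) R where
  toFun u := ⟨!![(u : R), 0; 0, 1], !![((u⁻¹ : Rˣ) : R), 0; 0, 1], by simp [one_fin_two],
    by simp [one_fin_two]⟩
  map_one' := by ext i j; fin_cases i <;> fin_cases j <;> simp
  map_mul' u v := by ext i j; fin_cases i <;> fin_cases j <;> simp

lemma val_diagLeft (u : Rˣ) : (diagLeft u).val = !![(u : R), 0; 0, 1] := rfl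

lemma continuous_diagLeft [TopologicalSpace R] [IsTopologicalRing R] :
    Continuous (diagLeft : Rˣ → GL (Fin 2) R) := by
  have hval : Continuous fun u : Rˣ ↦ (diagLeft u).val := by
    simp only [val_diagLeft]
    refine continuous_matrix fun i j ↦ ?_
    fin_cases i <;> fin_cases j <;> simp [Units.continuous_val, continuous_const]
  simp_rw [Units.continuous_iff, ← map_inv]
  exact ⟨hval, hval.comp continuous_inv⟩

end Ring

variable {R : Type*} [CommRing R]

/-- `swap * [1, x; 0, 1] * swap = [1, 0; x, 1]` and
`diag(a, d) = diagLeft a * swap * diagLeft d * swap`, so this is the LDU decomposition of `g`. -/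
lemma eq_lowerLeft_mul_diag_mul_upperRight (g : GL (Fin 2) R) (a : Rˣ)
    (ha : (a : R) = g 0 0) :
    g = swap R 0 1 * upperRightHom (g 1 0 * a⁻¹) * swap R 0 1 * diagLeft a * swap R 0 1 *
      diagLeft (a⁻¹ * g.det) * swap R 0 1 * upperRightHom (a⁻¹ * g 0 1) := by
  have hdet : (g.det : R) = g 0 0 * g 1 1 - g 0 1 * g 1 0 := by
    rw [val_det_apply, det_fin_two]
  ext i j
  simp only [Units.val_mul, val_swap, swap_zero_one_fin_two, upperRightHom_apply, val_diagLeft,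
    mul_fin_two]
  fin_cases i <;> fin_cases j <;> simp [hdet, ← ha]
  linear_combination (-(g 1 1 : R)) * a.inv_mul

lemma isUnit_apply_zero_zero_or_isUnit_apply_one_zero [IsLocalRing R] (g : GL (Fin 2) R) :
    IsUnit (g 0 0) ∨ IsUnit (g 1 0) := by
  have hdet : IsUnit (g 0 0 * g 1 1 + -(g 0 1 * g 1 0)) := by
    rw [← sub_eq_add_neg, ← det_fin_two, ← val_det_apply]
    exact Units.isUnit _
  rcases IsLocalRing.isUnit_or_isUnit_of_isUnit_add hdet with h | h
  · exact .inl (isUnit_of_mul_isUnit_left h)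
  · exact .inr (isUnit_of_mul_isUnit_right (by simpa using h.neg))

theorem eq_top_of_swap_mem_of_upperRight_mem_of_diagLeft_mem [IsLocalRing R]
    {K : Subgroup (GL (Fin 2) R)} (hX : swap R 0 1 ∈ K) (hE : ∀ t, upperRightHom t ∈ K)
    (hD : ∀ u, diagLeft u ∈ K) : K = ⊤ := by
  have hunit (g : GL (Fin 2) R) (hg : IsUnit (g 0 0)) : g ∈ K := by
    obtain ⟨a, ha⟩ := hg
    rw [eq_lowerLeft_mul_diag_mul_upperRight g a ha]
    repeat' apply K.mul_mem
    all_goals first | exact hX | exact hE _ | exact hD _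
  refine (Subgroup.eq_top_iff' K).2 fun g ↦ ?_
  rcases isUnit_apply_zero_zero_or_isUnit_apply_one_zero g with h | h
  · exact hunit g h
  · rw [← K.mul_mem_cancel_left hX]
    exact hunit _ (by simpa using h)

end Matrix.GeneralLinearGroup


theorem ZMod.closure_pair_eq_top_of_one_add_prime {p : ℕ} (hp : p.Prime) (hp2 : p ≠ 2) (n : ℕ)
    (g u : (ZMod (p ^ (n + 1)))ˣ) (hg : p - 1 ∣ orderOf g)
    (hu : (u : ZMod (p ^ (n + 1))) = 1 + p) :
    Subgroup.closure {g, u} = ⊤ := by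
  set H := Subgroup.closure ({g, u} : Set (ZMod (p ^ (n + 1)))ˣ)
  have hgH : p - 1 ∣ Nat.card H :=
    hg.trans (H.orderOf_dvd_natCard (Subgroup.subset_closure (by simp)))
  have huH : p ^ n ∣ Nat.card H := by
    rw [← orderOf_one_add_prime hp hp2 n, ← hu, orderOf_units]
    exact H.orderOf_dvd_natCard (Subgroup.subset_closure (by simp))
  have hcop : Nat.Coprime (p ^ n) (p - 1) :=
    .pow_left _ ((Nat.coprime_self_sub_right hp.one_le).2 (Nat.coprime_one_right _))
  have : NeZero (p ^ (n + 1)) := ⟨pow_ne_zero _ hp.ne_zero⟩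
  refine Subgroup.eq_top_of_le_card _ (Nat.le_of_dvd Nat.card_pos ?_)
  rw [Nat.card_eq_fintype_card, ZMod.card_units_eq_totient, Nat.totient_prime_pow_succ hp]
  exact hcop.mul_dvd_of_dvd_of_dvd huH hgH

namespace PadicInt

variable {p : ℕ} [Fact p.Prime]

theorem ringHom_eq_toZMod (f : ℤ_[p] →+* ZMod p) : f = toZMod :=
  ZMod.ringHom_eq_of_ker_eq _ _ <| by
    rw [ker_toZMod]
    exact IsLocalRing.eq_maximalIdeal
      (RingHom.ker_isMaximal_of_surjective f (ZMod.ringHom_surjective f))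

theorem mem_closure_of_forall_toZModPow_eq {S : Set ℤ_[p]ˣ} {u : ℤ_[p]ˣ}
    (h : ∀ n, ∃ v ∈ S, toZModPow (n + 1) (v : ℤ_[p]) = toZModPow (n + 1) u) :
    u ∈ closure S := by
  rw [Units.isOpenEmbedding_val.isInducing.closure_eq_preimage_closure_image, Set.mem_preimage,
    Metric.mem_closure_iff]
  intro ε hε
  obtain ⟨n, hn⟩ := exists_pow_neg_lt p hε
  obtain ⟨v, hvS, hv⟩ := h n
  have hvu : ‖(u - v : ℤ_[p])‖ ≤ (p : ℝ) ^ (-(n + 1 : ℕ) : ℤ) := by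
    rw [norm_le_pow_iff_mem_span_pow, ← ker_toZModPow, RingHom.mem_ker, map_sub, hv, sub_self]
  refine ⟨v, Set.mem_image_of_mem _ hvS, lt_of_le_of_lt ?_ hn⟩
  rw [dist_eq_norm]
  exact hvu.trans (zpow_le_zpow_right₀ (mod_cast (Fact.out : p.Prime).one_le) (by omega))

theorem topologicalClosure_closure_pair_eq_top (hp2 : p ≠ 2) {ζ η : ℤ_[p]ˣ}
    (hζ : Subgroup.zpowers (Units.map (toZMod (p := p)).toMonoidHom ζ) = ⊤)
    (hη : (η : ℤ_[p]) = 1 + p) :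
    (Subgroup.closure {ζ, η}).topologicalClosure = ⊤ := by
  have hp := Fact.out (p := p.Prime)
  have hζ' : orderOf (Units.map (toZMod (p := p)).toMonoidHom ζ) = p - 1 := by
    rw [orderOf_eq_card_of_zpowers_eq_top hζ, Nat.card_eq_fintype_card, ZMod.card_units]
  refine (Subgroup.eq_top_iff' _).2 fun u ↦ mem_closure_of_forall_toZModPow_eq fun n ↦ ?_
  set f := Units.map (toZModPow (p := p) (n + 1)).toMonoidHom
  have hfζ : ZMod.unitsMap (dvd_pow_self p n.succ_ne_zero) (f ζ)
      = Units.map (toZMod (p := p)).toMonoidHom ζ :=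
    Units.ext (RingHom.congr_fun
      (ringHom_eq_toZMod ((ZMod.castHom (dvd_pow_self p n.succ_ne_zero) _).comp (toZModPow _))) ζ)
  have hmap : (Subgroup.closure {ζ, η}).map f = ⊤ := by
    rw [MonoidHom.map_closure, Set.image_pair]
    refine ZMod.closure_pair_eq_top_of_one_add_prime hp hp2 n _ _ ?_ (by simp [f, hη])
    rw [← hζ', ← hfζ]
    exact orderOf_map_dvd _ _
  obtain ⟨v, hv, hfv⟩ := hmap ▸ Subgroup.mem_top (f u)
  exact ⟨v, hv, congrArg Units.val hfv⟩

open Matrix.GeneralLinearGroup in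
theorem topologicalClosure_eq_top_of_mem (hp2 : p ≠ 2) {ζ η : ℤ_[p]ˣ}
    (hζ : Subgroup.zpowers (Units.map (toZMod (p := p)).toMonoidHom ζ) = ⊤)
    (hη : (η : ℤ_[p]) = 1 + p) {C : Subgroup (GL (Fin 2) ℤ_[p])}
    (hX : swap ℤ_[p] 0 1 ∈ C) (hL : swap ℤ_[p] 0 1 * upperRightHom 1 * swap ℤ_[p] 0 1 ∈ C)
    (hDζ : diagLeft ζ ∈ C) (hDη : diagLeft η ∈ C) :
    C.topologicalClosure = ⊤ := by
  have hX' := C.le_topologicalClosure hX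
  have hE : upperRightHom 1 ∈ C.topologicalClosure := by
    rw [← Subgroup.mul_mem_cancel_left _ hX', ← Subgroup.mul_mem_cancel_right _ hX']
    exact C.le_topologicalClosure hL
  have hD : Subgroup.closure {ζ, η} ≤ C.topologicalClosure.comap diagLeft := by
    rw [Subgroup.closure_le, Set.insert_subset_iff, Set.singleton_subset_iff]
    exact ⟨C.le_topologicalClosure hDζ, C.le_topologicalClosure hDη⟩
  have hD' := Subgroup.topologicalClosure_minimal _ hD
    (C.isClosed_topologicalClosure.preimage continuous_diagLeft)
  rw [topologicalClosure_closure_pair_eq_top hp2 hζ hη] at hD'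
  exact eq_top_of_swap_mem_of_upperRight_mem_of_diagLeft_mem hX'
    (upperRightHom_mem_of_isClosed denseRange_natCast C.isClosed_topologicalClosure hE)
    fun u ↦ hD' (Subgroup.mem_top u)

end PadicInt

/-- Let `p` be an odd prime and `ζ ∈ ℤ_pˣ` a unit whose reduction mod `p`
generates `(ℤ/pℤ)ˣ`. Then the topological closure of the subgroup of `GL₂(ℤ_p)` generated by
`X = [[0,1],[1,0]]`, `P₋ = [[1,0],[1,1]]`, `M_ζ = [[ζ,0],[0,1]]` and
`P_{1+p} = [[1+p,0],[0,1]]` is all of `GL₂(ℤ_p)`. -/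
theorem stmt_0 (p : ℕ) [Fact p.Prime] (hp : p ≠ 2) (ζ : ℤ_[p]ˣ)
    (hζ : Subgroup.zpowers (Units.map (PadicInt.toZMod (p := p)).toMonoidHom ζ) = ⊤) :
    (Subgroup.closure {g : GL (Fin 2) ℤ_[p] |
        (g : Matrix (Fin 2) (Fin 2) ℤ_[p]) ∈
          ({!![0, 1; 1, 0], !![1, 0; 1, 1], !![(ζ : ℤ_[p]), 0; 0, 1],
            !![1 + (p : ℤ_[p]), 0; 0, 1]} :
            Set (Matrix (Fin 2) (Fin 2) ℤ_[p]))}).topologicalClosure = ⊤ := by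
  have hη : IsUnit (1 + (p : ℤ_[p])) :=
    IsLocalRing.isUnit_of_mem_nonunits_one_sub_self _ (by simpa using PadicInt.prime_p.not_isUnit)
  refine PadicInt.topologicalClosure_eq_top_of_mem hp hζ hη.unit_spec ?_ ?_ ?_ ?_ <;>
    exact Subgroup.subset_closure
      (by simp [Matrix.swap_zero_one_fin_two, Matrix.GeneralLinearGroup.val_diagLeft])
end

section
/- Let p be a prime and N a positive integer. The image of the natural map SL_N(ℤ) → SL_N(ℤ_p), induced by the canonical ring homomorphism ℤ → ℤ_p applied entrywise, is dense in SL_N(ℤ_p) with respect to the p-adic topology. -/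
/-!
Over a local ring, `SL_n` is generated by transvections. One clears the columns one at a time:
the entries of column `a` pair with a row of the inverse matrix to give `1`, so one of them is a
unit; a row operation moves it to the diagonal entry and normalises that to `1`, and further row
operations clear the rest of the column. Only for the last column is a diagonal unit unavoidable,
and there the determinant says it is `1`.

Since `ℤ` is dense in `ℤ_p`, every transvection of `SL_N(ℤ_p)` is a limit of transvections with
integer entries, so the closure of the image of `SL_N(ℤ)`, a closed subgroup, contains all of
`SL_N(ℤ_p)`.
-/

namespace Matrix.SpecialLinearGroup

variable {ι R : Type*} [Fintype ι] [DecidableEq ι] [CommRing R]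

variable (ι R) in
def elementarySubgroup : Subgroup (SpecialLinearGroup ι R) :=
  Subgroup.closure (Set.range TransvectionStruct.toSpecialLinearGroup)

lemma transvection_mem_elementarySubgroup {i j : ι} (hij : i ≠ j) (c : R) :
    transvection hij c ∈ elementarySubgroup ι R :=
  Subgroup.subset_closure ⟨⟨i, j, hij, c⟩, rfl⟩

def fixingBasisCompl (t : Finset ι) : Subgroup (SpecialLinearGroup ι R) :=
  fixingSubgroup _ ((fun j => (Pi.single j 1 : ι → R)) '' (t : Set ι)ᶜ)

lemma mem_fixingBasisCompl {t : Finset ι} {M : SpecialLinearGroup ι R} :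
    M ∈ fixingBasisCompl t ↔ ∀ j ∉ t, M • (Pi.single j 1 : ι → R) = Pi.single j 1 := by
  simp [fixingBasisCompl, mem_fixingSubgroup_iff]

lemma smul_single_one_apply (M : SpecialLinearGroup ι R) (i j : ι) :
    (M • (Pi.single j 1 : ι → R)) i = M i j := by
  simp [SpecialLinearGroup.smul_def]

lemma transvection_smul {i j : ι} (hij : i ≠ j) (c : R) (v : ι → R) :
    transvection hij c • v = v + (c * v j) • Pi.single i 1 := by
  change (1 + single i j c) *ᵥ v = _
  rw [add_mulVec, one_mulVec, single_mulVec_eq]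

lemma transvection_mem_fixingBasisCompl {t : Finset ι} {i j : ι} (hij : i ≠ j) (hj : j ∈ t)
    (c : R) : transvection hij c ∈ fixingBasisCompl t := by
  refine mem_fixingBasisCompl.mpr fun k hk => ?_
  rw [transvection_smul, Pi.single_eq_of_ne (ne_of_mem_of_not_mem hj hk), mul_zero, zero_smul,
    add_zero]

lemma eq_one_of_mem_fixingBasisCompl_empty {M : SpecialLinearGroup ι R}
    (hM : M ∈ fixingBasisCompl ∅) : M = 1 := by
  ext i j
  rw [← smul_single_one_apply, mem_fixingBasisCompl.mp hM j (Finset.notMem_empty j)]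
  simp [Matrix.one_apply, Pi.single_apply]

lemma apply_self_eq_one_of_mem_fixingBasisCompl_singleton {M : SpecialLinearGroup ι R} {a : ι}
    (hM : M ∈ fixingBasisCompl {a}) : M a a = 1 := by
  have hcol : (M : Matrix ι ι R) = updateCol 1 a (M • (Pi.single a 1 : ι → R)) := by
    ext i j
    by_cases hj : j = a
    · subst hj
      rw [updateCol_self, smul_single_one_apply]
    · rw [updateCol_ne hj, ← smul_single_one_apply,
        mem_fixingBasisCompl.mp hM j (Finset.notMem_singleton.mpr hj)]
      simp [Matrix.one_apply, Pi.single_apply]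
  -- Cramer's rule for the identity matrix evaluates the determinant of `updateCol 1 a v`.
  calc M a a = cramer 1 (M • (Pi.single a 1 : ι → R)) a := by
        rw [cramer_one, Module.End.one_apply, smul_single_one_apply]
    _ = 1 := by rw [cramer_apply, ← hcol, M.2]

lemma exists_smul_apply_eq_one {t : Finset ι} {v : ι → R} {a k : ι} (hak : a ≠ k) (hk : k ∈ t)
    (hv : IsUnit (v k)) : ∃ T ∈ elementarySubgroup ι R ⊓ fixingBasisCompl t, (T • v) a = 1 := by
  obtain ⟨u, hu⟩ := hv
  refine ⟨transvection hak (↑u⁻¹ * (1 - v a)), ⟨transvection_mem_elementarySubgroup hak _,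
    transvection_mem_fixingBasisCompl hak hk _⟩, ?_⟩
  simp [transvection_smul, ← hu, mul_comm _ (u : R), ← mul_assoc]

lemma exists_smul_eq_single {t : Finset ι} {v : ι → R} {a : ι} (ha : a ∈ t) (hva : v a = 1) :
    ∃ T ∈ elementarySubgroup ι R ⊓ fixingBasisCompl t, T • v = Pi.single a 1 := by
  suffices h : ∀ u : Finset ι, a ∉ u → ∃ T ∈ elementarySubgroup ι R ⊓ fixingBasisCompl t,
      ∀ i, (T • v) i = if i ∈ u then 0 else v i by
    obtain ⟨T, hT, hTv⟩ := h (Finset.univ.erase a) (Finset.notMem_erase a _)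
    refine ⟨T, hT, funext fun i => ?_⟩
    by_cases hia : i = a <;> simp [hTv, hia, hva]
  intro u hu
  induction u using Finset.induction_on with
  | empty => exact ⟨1, one_mem _, by simp⟩
  | insert i u hiu ih =>
    have hia : i ≠ a := fun h => hu (h ▸ Finset.mem_insert_self i u)
    obtain ⟨T, hT, hTv⟩ := ih fun h => hu (Finset.mem_insert_of_mem h)
    refine ⟨transvection hia (-v i) * T, mul_mem ⟨transvection_mem_elementarySubgroup hia _,
      transvection_mem_fixingBasisCompl hia ha _⟩ hT, fun k => ?_⟩
    have haU : a ∉ u := fun h => hu (Finset.mem_insert_of_mem h)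
    rw [mul_smul, transvection_smul, hTv a, if_neg haU, hva]
    by_cases hki : k = i <;> simp [hTv, hki, hiu]

section IsLocalRing

variable [IsLocalRing R]

lemma exists_isUnit_apply_of_mem_fixingBasisCompl {t : Finset ι} {M : SpecialLinearGroup ι R}
    (hM : M ∈ fixingBasisCompl t) {a : ι} (ha : a ∈ t) : ∃ k ∈ t, IsUnit (M k a) := by
  have hsum : ∑ k ∈ t, (M⁻¹ : SpecialLinearGroup ι R) a k * M k a = 1 := by
    have hinv : ∀ k ∉ t, (M⁻¹ : SpecialLinearGroup ι R) a k = 0 := fun k hk => by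
      rw [← smul_single_one_apply, mem_fixingBasisCompl.mp (inv_mem hM) k hk,
        Pi.single_eq_of_ne (ne_of_mem_of_not_mem ha hk)]
    rw [Finset.sum_subset (Finset.subset_univ t) fun k _ hk => by rw [hinv k hk, zero_mul],
      ← Matrix.mul_apply, ← coe_mul, inv_mul_cancel, coe_one, one_apply_eq]
  by_contra! hnon
  refine (IsLocalRing.maximalIdeal.isMaximal R).ne_top ((Ideal.eq_top_iff_one _).mpr ?_)
  rw [← hsum]
  exact Ideal.sum_mem _ fun k hk => Ideal.mul_mem_left _ _ (hnon k hk)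

lemma exists_smul_single_apply_self_eq_one {s : Finset ι} {a : ι} (ha : a ∉ s)
    {M : SpecialLinearGroup ι R} (hM : M ∈ fixingBasisCompl (insert a s)) :
    ∃ T ∈ elementarySubgroup ι R ⊓ fixingBasisCompl (insert a s),
      (T • M • (Pi.single a 1 : ι → R)) a = 1 := by
  obtain ⟨k, hk, hunit⟩ := exists_isUnit_apply_of_mem_fixingBasisCompl hM (s.mem_insert_self a)
  rw [← smul_single_one_apply] at hunit
  rcases s.eq_empty_or_nonempty with rfl | ⟨b, hb⟩
  · exact ⟨1, one_mem _, by rw [one_smul, smul_single_one_apply,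
      apply_self_eq_one_of_mem_fixingBasisCompl_singleton hM]⟩
  by_cases hka : k = a
  · subst hka
    have hbk : b ≠ k := ne_of_mem_of_not_mem hb ha
    obtain ⟨T₁, hT₁, h₁⟩ := exists_smul_apply_eq_one hbk hk hunit
    obtain ⟨T₂, hT₂, h₂⟩ := exists_smul_apply_eq_one hbk.symm (Finset.mem_insert_of_mem hb)
      (h₁ ▸ isUnit_one)
    exact ⟨T₂ * T₁, mul_mem hT₂ hT₁, by rwa [mul_smul]⟩
  · exact exists_smul_apply_eq_one (Ne.symm hka) hk hunit

lemma fixingBasisCompl_le_elementarySubgroup (t : Finset ι) :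
    fixingBasisCompl t ≤ elementarySubgroup ι R := by
  induction t using Finset.induction_on with
  | empty => exact fun M hM => eq_one_of_mem_fixingBasisCompl_empty hM ▸ one_mem _
  | insert a s ha ih =>
    intro M hM
    obtain ⟨T, hT, hTM⟩ : ∃ T ∈ elementarySubgroup ι R ⊓ fixingBasisCompl (insert a s),
        T • M • (Pi.single a 1 : ι → R) = Pi.single a 1 := by
      obtain ⟨T₁, hT₁, h₁⟩ := exists_smul_single_apply_self_eq_one ha hM
      obtain ⟨T₂, hT₂, h₂⟩ := exists_smul_eq_single (s.mem_insert_self a) h₁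
      exact ⟨T₂ * T₁, mul_mem hT₂ hT₁, by rw [mul_smul, h₂]⟩
    obtain ⟨hTE, hTF⟩ := Subgroup.mem_inf.mp hT
    have hTM' : T * M ∈ fixingBasisCompl s := by
      refine mem_fixingBasisCompl.mpr fun j hj => ?_
      rw [mul_smul]
      by_cases hja : j = a
      · exact hja ▸ hTM
      · have hjt : j ∉ insert a s := by simp [hja, hj]
        rw [mem_fixingBasisCompl.mp hM j hjt, mem_fixingBasisCompl.mp hTF j hjt]
    simpa using mul_mem (inv_mem hTE) (ih hTM')

theorem elementarySubgroup_eq_top : elementarySubgroup ι R = ⊤ :=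
  eq_top_iff.mpr fun _ _ => fixingBasisCompl_le_elementarySubgroup Finset.univ
    (mem_fixingBasisCompl.mpr fun j hj => absurd (Finset.mem_univ j) hj)

end IsLocalRing

lemma map_transvection {S : Type*} [CommRing S] (f : R →+* S) {i j : ι} (hij : i ≠ j) (c : R) :
    map f (transvection hij c) = transvection hij (f c) := by
  ext a b
  simp [transvection_coe, Matrix.one_apply, Matrix.single_apply, apply_ite f]

lemma continuous_transvection [TopologicalSpace R] [IsTopologicalRing R] {i j : ι} (hij : i ≠ j) :
    Continuous (transvection hij : R → SpecialLinearGroup ι R) := by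
  refine continuous_induced_rng.mpr (continuous_const.add ?_)
  exact (continuous_id.smul (continuous_const (y := single i j (1 : R)))).congr fun c => by
    simp [smul_single]

theorem denseRange_map {S : Type*} [CommRing S] [IsLocalRing S] [TopologicalSpace S]
    [IsTopologicalRing S] {f : R →+* S} (hf : DenseRange f) :
    DenseRange (map (n := ι) f) := by
  have hle : elementarySubgroup ι S ≤ (map f).range.topologicalClosure := by
    refine Subgroup.closure_le _ |>.mpr ?_
    rintro _ ⟨⟨i, j, hij, c⟩, rfl⟩
    exact hf.induction_on c (isClosed_closure.preimage (continuous_transvection hij))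
      fun r => subset_closure ⟨transvection hij r, map_transvection f hij r⟩
  rw [elementarySubgroup_eq_top, top_le_iff] at hle
  rw [DenseRange, dense_iff_closure_eq, ← MonoidHom.coe_range, ← Subgroup.topologicalClosure_coe,
    hle, Subgroup.coe_top]

end Matrix.SpecialLinearGroup

instance specialLinearGroupTopology (n : Type*) [DecidableEq n] [Fintype n]
    (R : Type*) [CommRing R] [TopologicalSpace R] :
    TopologicalSpace (Matrix.SpecialLinearGroup n R) :=
  instTopologicalSpaceSubtype

theorem stmt_7_general (p N : ℕ) [Fact p.Prime] :
    Dense (Set.range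
      (Matrix.SpecialLinearGroup.map (n := Fin N) (Int.castRingHom ℤ_[p]))) :=
  Matrix.SpecialLinearGroup.denseRange_map PadicInt.denseRange_intCast

/-- The image of `SL_N(ℤ) → SL_N(ℤ_p)` (entrywise `ℤ → ℤ_p`) is dense in
`SL_N(ℤ_p)` for the p-adic topology. -/
theorem stmt_7 (p N : ℕ) [Fact p.Prime] (hN : 0 < N) :
    Dense (Set.range
      (Matrix.SpecialLinearGroup.map (n := Fin N) (Int.castRingHom ℤ_[p]))) :=
  stmt_7_general p N
end

section
/- Let p be an odd prime. The closure, in the unit group ℤ_pˣ with its p-adic topology, of the cyclic subgroup generated by the element 1+p equals the subgroup of principal units {u ∈ ℤ_pˣ : u ≡ 1 (mod p)}, i.e. the set of units u with u − 1 ∈ pℤ_p. -/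
/-!
The principal units form an open, hence closed, subgroup containing `1 + p`, which gives one
inclusion. Conversely, lifting the exponent gives `(1 + p) ^ p ^ n = 1 + p ^ (n + 1) c` with `c`
a unit, so the powers `(1 + p) ^ (p ^ n * k)` are `≡ 1 + k p ^ (n + 1) c (mod p ^ (n + 2))` and
realise every residue class of `1 + p ^ (n + 1) ℤ_p` modulo `p ^ (n + 2)`. Correcting one `p`-adic
digit at a time, every `x ≡ 1 (mod p)` is a limit of powers of `1 + p`.
-/

open PadicInt

namespace PadicInt

variable {p : ℕ} [Fact p.Prime]

theorem isUnit_iff_not_dvd {x : ℤ_[p]} : IsUnit x ↔ ¬(p : ℤ_[p]) ∣ x := by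
  rw [← norm_lt_one_iff_dvd, ← not_isUnit_iff, not_not]

theorem not_dvd_one_add_p : ¬(p : ℤ_[p]) ∣ 1 + p := by
  simp [dvd_add_self_right, prime_p.not_dvd_one]

theorem exists_natCast_dvd_sub_mul {e : ℤ_[p]} (he : IsUnit e) (t : ℤ_[p]) :
    ∃ k : ℕ, (p : ℤ_[p]) ∣ t - k * e := by
  obtain ⟨e', he'⟩ := he.exists_right_inv
  refine ⟨appr (t * e') 1, ?_⟩
  have happr : (p : ℤ_[p]) ∣ t * e' - appr (t * e') 1 := by
    simpa [Ideal.mem_span_singleton] using appr_spec 1 (t * e')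
  have : t - appr (t * e') 1 * e = (t * e' - appr (t * e') 1) * e := by
    linear_combination (-t) * he'
  rw [this]
  exact happr.mul_right e

theorem exists_dvd_sub_mul_one_add_pow {x y c : ℤ_[p]} {m : ℕ} (hy : IsUnit y) (hc : IsUnit c)
    (hxy : (p : ℤ_[p]) ^ (m + 1) ∣ x - y) :
    ∃ k : ℕ, (p : ℤ_[p]) ^ (m + 2) ∣ x - y * (1 + p ^ (m + 1) * c) ^ k := by
  obtain ⟨t, ht⟩ := hxy
  obtain ⟨k, s, hs⟩ := exists_natCast_dvd_sub_mul (hy.mul hc) t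
  obtain ⟨r, hr⟩ := sq_dvd_add_pow_sub_sub ((p : ℤ_[p]) ^ (m + 1) * c) 1 k
  rw [one_pow, one_pow, one_mul] at hr
  exact ⟨k, s - p ^ m * y * c ^ 2 * r, by linear_combination ht - y * hr + p ^ (m + 1) * hs⟩

theorem exists_isUnit_one_add_p_pow_p_pow (hp : p ≠ 2) (n : ℕ) :
    ∃ c : ℤ_[p], IsUnit c ∧ (1 + p : ℤ_[p]) ^ p ^ n = 1 + p ^ (n + 1) * c := by
  have hmult : emultiplicity (p : ℤ_[p]) ((1 + p) ^ p ^ n - 1) = (n + 1 : ℕ) := by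
    have := emultiplicity_pow_prime_pow_sub_pow_prime_pow (x := 1 + (p : ℤ_[p])) (y := 1)
      prime_p ((Fact.out : p.Prime).odd_of_ne_two hp) (by simp) not_dvd_one_add_p n
    have hself : emultiplicity (p : ℤ_[p]) p = 1 := by
      simpa using emultiplicity_pow_self_of_prime (prime_p (p := p)) 1
    rw [one_pow, add_sub_cancel_left, hself] at this
    rw [this, add_comm, Nat.cast_succ]
  obtain ⟨⟨c, hc⟩, hnot⟩ := emultiplicity_eq_coe.1 hmult
  refine ⟨c, isUnit_iff_not_dvd.2 fun ⟨d, hd⟩ => hnot ⟨d, ?_⟩, by rw [← hc]; ring⟩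
  rw [hc, hd]; ring

theorem exists_pow_dvd_sub_one_add_p_pow (hp : p ≠ 2) {x : ℤ_[p]} (hx : (p : ℤ_[p]) ∣ x - 1)
    (n : ℕ) : ∃ a : ℕ, (p : ℤ_[p]) ^ (n + 1) ∣ x - (1 + p) ^ a := by
  induction n with
  | zero => exact ⟨0, by simpa using hx⟩
  | succ n ih =>
    obtain ⟨a, ha⟩ := ih
    obtain ⟨c, hc, hpow⟩ := exists_isUnit_one_add_p_pow_p_pow hp n
    obtain ⟨k, hk⟩ :=
      exists_dvd_sub_mul_one_add_pow ((isUnit_iff_not_dvd.2 not_dvd_one_add_p).pow a) hc ha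
    refine ⟨a + p ^ n * k, ?_⟩
    rwa [pow_add (1 + p : ℤ_[p]), pow_mul, hpow]

theorem mem_closure_range_one_add_p_pow (hp : p ≠ 2) {x : ℤ_[p]} (hx : (p : ℤ_[p]) ∣ x - 1) :
    x ∈ closure (Set.range ((1 + p : ℤ_[p]) ^ · : ℕ → ℤ_[p])) := by
  refine Metric.mem_closure_iff.2 fun ε hε => ?_
  obtain ⟨n, hn⟩ := exists_pow_neg_lt p hε
  obtain ⟨a, ha⟩ := exists_pow_dvd_sub_one_add_p_pow hp hx n
  refine ⟨_, ⟨a, rfl⟩, lt_of_le_of_lt ?_ hn⟩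
  rw [dist_eq_norm, norm_le_pow_iff_mem_span_pow, Ideal.mem_span_singleton]
  exact (pow_dvd_pow _ n.le_succ).trans ha

variable (p) in
noncomputable def principalUnits : Subgroup ℤ_[p]ˣ :=
  (Units.map (toZMod : ℤ_[p] →+* ZMod p).toMonoidHom).ker

theorem mem_principalUnits {v : ℤ_[p]ˣ} : v ∈ principalUnits p ↔ (p : ℤ_[p]) ∣ v - 1 := by
  rw [principalUnits, MonoidHom.mem_ker, Units.ext_iff, Units.coe_map, Units.val_one,
    ← Ideal.mem_span_singleton, ← maximalIdeal_eq_span_p, ← ker_toZMod, RingHom.mem_ker, map_sub,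
    sub_eq_zero, map_one]
  rfl

theorem isOpen_principalUnits : IsOpen (principalUnits p : Set ℤ_[p]ˣ) := by
  have : (principalUnits p : Set ℤ_[p]ˣ) = Units.val ⁻¹' Metric.ball 1 1 := by
    ext v
    rw [SetLike.mem_coe, mem_principalUnits, Set.mem_preimage, Metric.mem_ball, dist_eq_norm,
      norm_lt_one_iff_dvd]
  rw [this]
  exact Metric.isOpen_ball.preimage Units.continuous_val

end PadicInt

/-- For an odd prime `p`, the topological closure in `ℤ_pˣ` of the cyclic
subgroup generated by the unit `1 + p` is exactly the group of principal units
`{v ∈ ℤ_pˣ | v ≡ 1 (mod p)}`, i.e. units `v` with `v - 1 ∈ pℤ_p`. -/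
theorem stmt_10 (p : ℕ) [Fact p.Prime] (hp : p ≠ 2)
    (u : ℤ_[p]ˣ) (hu : (u : ℤ_[p]) = 1 + (p : ℤ_[p])) :
    ((Subgroup.zpowers u).topologicalClosure : Set ℤ_[p]ˣ) =
      {v : ℤ_[p]ˣ | (p : ℤ_[p]) ∣ (v : ℤ_[p]) - 1} := by
  have hu_mem : u ∈ principalUnits p := mem_principalUnits.2 (by simp [hu])
  apply subset_antisymm
  · exact fun v hv => mem_principalUnits.1 <| Subgroup.topologicalClosure_minimal _
      (Subgroup.zpowers_le.2 hu_mem) (Subgroup.isClosed_of_isOpen _ isOpen_principalUnits) hv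
  · intro v hv
    rw [Subgroup.topologicalClosure_coe,
      Units.isOpenEmbedding_val.isEmbedding.closure_eq_preimage_closure_image]
    refine closure_mono ?_ (mem_closure_range_one_add_p_pow hp hv)
    rintro _ ⟨a, rfl⟩
    exact ⟨u ^ a, Subgroup.npow_mem_zpowers u a, by simp [hu]⟩
end

section
/- For every positive integer N, the group GL_N(ℤ) is finitely generated: there exists a finite subset S of GL_N(ℤ) such that the subgroup generated by S is all of GL_N(ℤ). -/
/-!
Integer Gaussian elimination. Call `A` normalised on a set `s` of indices (`IsOneOn s A`) if its
rows and columns indexed by `s` are those of the identity, i.e. `A = diag(1, A')` in a basis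
listing `s` first. For `κ ∉ s`, column `κ` of such an `A ∈ GL_n(ℤ)` vanishes on `s` and is
unimodular, since row `κ` of `A⁻¹` pairs with it to `1`. Row operations `row p += c • row q` with
`p, q ∉ s` keep `A` normalised on `s` and run Euclid's algorithm on that column until a single
entry `±1` is left; a sign change and two transvections move it to `e_κ`, and column operations
then clear row `κ`, so `A` becomes normalised on `insert κ s`. By induction every element of
`GL_n(ℤ)` is a product of the transvections `1 + E_ij` and the sign changes
`diag(1, …, -1, …, 1)`, which form a finite set.
-/

open Matrix

theorem Int.natAbs_emod_lt (a : ℤ) {b : ℤ} (hb : b ≠ 0) : (a % b).natAbs < b.natAbs := by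
  have h₁ := Int.emod_nonneg a hb
  have h₂ := Int.emod_lt_abs a hb
  rw [Int.abs_eq_natAbs] at h₂
  omega

theorem sum_natAbs_update_lt {n : Type*} [Fintype n] [DecidableEq n] {v : n → ℤ} {p : n}
    {r : ℤ} (hr : r.natAbs < (v p).natAbs) :
    ∑ i, (Function.update v p r i).natAbs < ∑ i, (v i).natAbs := by
  refine Finset.sum_lt_sum (fun i _ => ?_) ⟨p, Finset.mem_univ p, by simpa using hr⟩
  rcases eq_or_ne i p with rfl | hi
  · simpa using hr.le
  · simp [hi]

namespace Matrix

variable {n R : Type*} [DecidableEq n]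

def IsOneOn [Zero R] [One R] (s : Set n) (A : Matrix n n R) : Prop :=
  ∀ i j, (i ∈ s ∨ j ∈ s) → A i j = (1 : Matrix n n R) i j

theorem isOneOn_one [Zero R] [One R] (s : Set n) : IsOneOn s (1 : Matrix n n R) :=
  fun _ _ _ => rfl

theorem IsOneOn.eq_one_of_univ [Zero R] [One R] {A : Matrix n n R} (hA : IsOneOn Set.univ A) :
    A = 1 :=
  ext fun i j => hA i j (.inl trivial)

theorem IsOneOn.mul [Fintype n] [NonAssocSemiring R] {s : Set n} {A B : Matrix n n R}
    (hA : IsOneOn s A) (hB : IsOneOn s B) : IsOneOn s (A * B) := by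
  rintro i j (hi | hj)
  · have hrow : ∀ k, A i k = (1 : Matrix n n R) i k := fun k => hA i k (.inl hi)
    calc (A * B) i j = ((1 : Matrix n n R) * B) i j := by simp only [mul_apply, hrow]
      _ = _ := by rw [Matrix.one_mul]; exact hB i j (.inl hi)
  · have hcol : ∀ k, B k j = (1 : Matrix n n R) k j := fun k => hB k j (.inr hj)
    calc (A * B) i j = (A * (1 : Matrix n n R)) i j := by simp only [mul_apply, hcol]
      _ = _ := by rw [Matrix.mul_one]; exact hA i j (.inr hj)

theorem isOneOn_transvection [CommRing R] {s : Set n} {i j : n} (hi : i ∉ s) (hj : j ∉ s) (c : R) :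
    IsOneOn s (transvection i j c) := by
  rintro a b hab
  simp only [transvection, add_apply, single_apply]
  grind

theorem isOneOn_diagonal_mulSingle [CommRing R] {s : Set n} {k : n} (hk : k ∉ s) (u : R) :
    IsOneOn s (diagonal (Pi.mulSingle k u)) := by
  rintro a b hab
  simp only [diagonal_apply, one_apply, Pi.mulSingle_apply]
  grind

theorem transvection_mulVec [Fintype n] [CommRing R] (i j : n) (c : R) (v : n → R) :
    transvection i j c *ᵥ v = Function.update v i (v i + c * v j) := by
  ext k
  simp only [transvection, add_mulVec, one_mulVec, single_mulVec, Pi.add_apply,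
    Function.update_apply]
  split_ifs <;> simp_all

theorem mul_transvection_eq_add_single [Fintype n] [CommRing R] {M : Matrix n n R} {κ : n}
    (hM : M.col κ = Pi.single κ 1) (j : n) (c : R) :
    M * transvection κ j c = M + single κ j c := by
  rw [transvection, Matrix.mul_add, Matrix.mul_one, add_right_inj]
  ext a b
  have hMa : M a κ = (Pi.single κ 1 : n → R) a := congrFun hM a
  rcases eq_or_ne b j with rfl | hb
  · rw [mul_single_apply_same, hMa, single_apply]
    rcases eq_or_ne κ a with rfl | ha <;> simp [*]
  · rw [mul_single_apply_of_ne _ _ _ _ _ hb, single_apply_of_col_ne _ _ hb.symm]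

end Matrix

namespace Matrix.GeneralLinearGroup

variable {n R : Type*} [Fintype n] [DecidableEq n] [CommRing R]

def isOneOnSubmonoid (s : Set n) : Submonoid (GL n R) where
  carrier := {g | IsOneOn s (g : Matrix n n R)}
  mul_mem' := IsOneOn.mul
  one_mem' := isOneOn_one s

def transvectionGL {i j : n} (hij : i ≠ j) (c : R) : GL n R :=
  SpecialLinearGroup.toGL (SpecialLinearGroup.transvection hij c)

def signFlip (k : n) : GL n R where
  val := diagonal (Pi.mulSingle k (-1))
  inv := diagonal (Pi.mulSingle k (-1))
  val_inv := by ext i j; simp [diagonal_apply, Pi.mulSingle_apply, one_apply]; grind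
  inv_val := by ext i j; simp [diagonal_apply, Pi.mulSingle_apply, one_apply]; grind

theorem transvectionGL_smul {p q : n} (hpq : p ≠ q) (c : R) (v : n → R) :
    transvectionGL hpq c • v = Function.update v p (v p + c * v q) :=
  transvection_mulVec p q c v

theorem signFlip_smul (k : n) (v : n → R) :
    (signFlip k : GL n R) • v = Function.update v k (-v k) := by
  ext i
  change (diagonal _ *ᵥ v) i = _
  rw [mulVec_diagonal, Function.update_apply, Pi.mulSingle_apply]
  split_ifs <;> simp_all

theorem col_mul_eq_smul_col (B A : GL n R) (κ : n) :
    ((B * A : GL n R) : Matrix n n R).col κ = B • (A : Matrix n n R).col κ :=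
  rfl

theorem exists_dotProduct_smul_eq_one {v w : n → R} (g : GL n R) (hw : w ⬝ᵥ v = 1) :
    ∃ w', w' ⬝ᵥ (g • v) = 1 :=
  ⟨w ᵥ* (g⁻¹ : GL n R), by
    rw [Units.smul_def, smul_eq_mulVec, dotProduct_mulVec, vecMul_vecMul, ← Units.val_mul,
      inv_mul_cancel, Units.val_one, vecMul_one, hw]⟩

variable (n) in
def elementaryGenerators : Set (GL n ℤ) :=
  Set.range (fun p : {p : n × n // p.1 ≠ p.2} => transvectionGL p.2 1) ∪ Set.range signFlip

theorem finite_elementaryGenerators : (elementaryGenerators n).Finite :=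
  (Set.finite_range _).union (Set.finite_range _)

theorem transvectionGL_mem_closure {i j : n} (hij : i ≠ j) (c : ℤ) :
    transvectionGL hij c ∈ Subgroup.closure (elementaryGenerators n) := by
  have hgen : transvectionGL hij 1 ∈ Subgroup.closure (elementaryGenerators n) :=
    Subgroup.subset_closure (Or.inl ⟨⟨(i, j), hij⟩, rfl⟩)
  simp only [transvectionGL] at hgen ⊢
  induction c using Int.induction_on with
  | zero => simp
  | succ k ih =>
    rw [SpecialLinearGroup.transvection_add, map_mul]
    exact mul_mem ih hgen
  | pred k ih =>
    rw [sub_eq_add_neg, SpecialLinearGroup.transvection_add,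
      ← SpecialLinearGroup.transvection_inv hij (1 : ℤ), map_mul, map_inv]
    exact mul_mem ih (inv_mem hgen)

def elementaryFixing (s : Set n) : Submonoid (GL n ℤ) :=
  (Subgroup.closure (elementaryGenerators n)).toSubmonoid ⊓ isOneOnSubmonoid s

variable {s : Set n}

theorem transvectionGL_mem_elementaryFixing {p q : n} (hpq : p ≠ q) (hp : p ∉ s) (hq : q ∉ s)
    (c : ℤ) : transvectionGL hpq c ∈ elementaryFixing s :=
  ⟨transvectionGL_mem_closure hpq c, isOneOn_transvection hp hq c⟩

theorem signFlip_mem_elementaryFixing {k : n} (hk : k ∉ s) : signFlip k ∈ elementaryFixing s :=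
  ⟨Subgroup.subset_closure (Or.inr ⟨k, rfl⟩), isOneOn_diagonal_mulSingle hk (-1)⟩

theorem exists_smul_single_eq_single_one {i κ : n} (hi : i ∉ s) (hκ : κ ∉ s) {u : ℤ}
    (hu : IsUnit u) : ∃ B ∈ elementaryFixing s, B • (Pi.single i u : n → ℤ) = Pi.single κ 1 := by
  obtain ⟨B₁, hB₁, h₁⟩ :
      ∃ B ∈ elementaryFixing s, B • (Pi.single i u : n → ℤ) = Pi.single i 1 := by
    rcases Int.isUnit_iff.mp hu with rfl | rfl
    · exact ⟨1, one_mem _, one_smul _ _⟩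
    · refine ⟨signFlip i, signFlip_mem_elementaryFixing hi, ?_⟩
      ext j
      simp only [signFlip_smul, Function.update_apply, Pi.single_apply]
      grind
  obtain ⟨B₂, hB₂, h₂⟩ :
      ∃ B ∈ elementaryFixing s, B • (Pi.single i 1 : n → ℤ) = Pi.single κ 1 := by
    by_cases hiκ : i = κ
    · exact ⟨1, one_mem _, by rw [one_smul, hiκ]⟩
    -- `e_i ↦ e_i + e_κ ↦ e_κ`
    refine ⟨transvectionGL hiκ (-1) * transvectionGL (Ne.symm hiκ) 1,
      mul_mem (transvectionGL_mem_elementaryFixing hiκ hi hκ _)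
        (transvectionGL_mem_elementaryFixing (Ne.symm hiκ) hκ hi _), ?_⟩
    rw [mul_smul, transvectionGL_smul, transvectionGL_smul]
    ext j
    simp only [Function.update_apply, Pi.single_apply]
    grind
  exact ⟨B₂ * B₁, mul_mem hB₂ hB₁, by rw [mul_smul, h₁, h₂]⟩

theorem exists_smul_eq_single_one {κ : n} (hκ : κ ∉ s) (v : n → ℤ) (hv : ∀ i ∈ s, v i = 0)
    (hunimod : ∃ w, w ⬝ᵥ v = 1) : ∃ B ∈ elementaryFixing s, B • v = Pi.single κ 1 := by
  induction hm : ∑ i, (v i).natAbs using Nat.strong_induction_on generalizing v with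
  | _ m ih =>
  obtain ⟨w, hw⟩ := hunimod
  by_cases htwo : ∃ p q, p ≠ q ∧ v q ≠ 0 ∧ (v q).natAbs ≤ (v p).natAbs
  · obtain ⟨p, q, hpq, hq, hle⟩ := htwo
    have hps : p ∉ s := fun h => hq (by simpa [hv p h] using hle)
    have hqs : q ∉ s := fun h => hq (hv q h)
    set T := transvectionGL hpq (-(v p / v q))
    have hTv : T • v = Function.update v p (v p % v q) := by
      rw [transvectionGL_smul, Int.emod_def]
      ring_nf
    have hlt : ∑ i, ((T • v) i).natAbs < m :=
      hm ▸ hTv ▸ sum_natAbs_update_lt ((Int.natAbs_emod_lt (v p) hq).trans_le hle)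
    have hTv_supp : ∀ i ∈ s, (T • v) i = 0 := fun i hi => by
      rw [hTv, Function.update_of_ne (ne_of_mem_of_not_mem hi hps)]
      exact hv i hi
    obtain ⟨B, hB, hBv⟩ := ih _ hlt (T • v) hTv_supp (exists_dotProduct_smul_eq_one T hw) rfl
    exact ⟨B * T, mul_mem hB (transvectionGL_mem_elementaryFixing hpq hps hqs _),
      by rw [mul_smul, hBv]⟩
  · push Not at htwo
    obtain ⟨i, hi⟩ : ∃ i, v i ≠ 0 := by
      by_contra! h
      simp [show v = 0 from funext h] at hw
    have hv_single : v = Pi.single i (v i) := by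
      ext j
      rcases eq_or_ne j i with rfl | hji
      · simp
      · by_contra hj
        have := htwo j i hji hi
        have := htwo i j hji.symm (by simpa [hji] using hj)
        omega
    rw [hv_single, dotProduct_single] at hw
    rw [hv_single]
    exact exists_smul_single_eq_single_one (fun h => hi (hv i h)) hκ (.of_mul_eq_one_right _ hw)

theorem exists_mul_col_eq_single_one (A : GL n ℤ) (hA : IsOneOn s (A : Matrix n n ℤ)) {κ : n}
    (hκ : κ ∉ s) : ∃ B ∈ elementaryFixing s,
      IsOneOn s ((B * A : GL n ℤ) : Matrix n n ℤ) ∧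
        ((B * A : GL n ℤ) : Matrix n n ℤ).col κ = Pi.single κ 1 := by
  have hsupp : ∀ i ∈ s, (A : Matrix n n ℤ).col κ i = 0 := fun i hi => by
    simpa [ne_of_mem_of_not_mem hi hκ] using hA i κ (.inl hi)
  have hunimod : ((A⁻¹ : GL n ℤ) : Matrix n n ℤ) κ ⬝ᵥ (A : Matrix n n ℤ).col κ = 1 := by
    change ((A⁻¹ * A : GL n ℤ) : Matrix n n ℤ) κ κ = 1
    rw [inv_mul_cancel, Units.val_one, one_apply_eq]
  obtain ⟨B, hB, hBA⟩ := exists_smul_eq_single_one hκ _ hsupp ⟨_, hunimod⟩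
  exact ⟨B, hB, hB.2.mul hA, by rw [col_mul_eq_smul_col, hBA]⟩

theorem exists_mul_eq_sub_sum_single (A : GL n ℤ) {κ : n}
    (hcol : (A : Matrix n n ℤ).col κ = Pi.single κ 1) (t : Finset n) (hκt : κ ∉ t) :
    ∃ C ∈ Subgroup.closure (elementaryGenerators n), ((A * C : GL n ℤ) : Matrix n n ℤ) =
      A - ∑ j ∈ t, single κ j ((A : Matrix n n ℤ) κ j) := by
  induction t using Finset.induction_on with
  | empty => exact ⟨1, one_mem _, by simp⟩
  | insert j t hjt ih =>
    rw [Finset.mem_insert, not_or] at hκt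
    obtain ⟨hκj, hκt⟩ := hκt
    obtain ⟨C, hC, hAC⟩ := ih hκt
    refine ⟨C * transvectionGL hκj (-(A : Matrix n n ℤ) κ j),
      mul_mem hC (transvectionGL_mem_closure hκj _), ?_⟩
    have hcol' : ((A * C : GL n ℤ) : Matrix n n ℤ).col κ = Pi.single κ 1 := by
      ext i
      rw [hAC, ← hcol]
      simp only [col_apply, sub_apply, Matrix.sum_apply]
      rw [Finset.sum_eq_zero fun j' hj' =>
        single_apply_of_col_ne _ _ (ne_of_mem_of_not_mem hj' hκt) _, sub_zero]
    rw [← mul_assoc, Units.val_mul _ (transvectionGL _ _)]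
    rw [show ((transvectionGL hκj _ : GL n ℤ) : Matrix n n ℤ) = transvection κ j _ from rfl,
      mul_transvection_eq_add_single hcol', hAC, Finset.sum_insert hjt, ← single_neg]
    abel

theorem exists_mul_isOneOn_insert (A : GL n ℤ) (hA : IsOneOn s (A : Matrix n n ℤ)) {κ : n}
    (hcol : (A : Matrix n n ℤ).col κ = Pi.single κ 1) :
    ∃ C ∈ Subgroup.closure (elementaryGenerators n),
      IsOneOn (insert κ s) ((A * C : GL n ℤ) : Matrix n n ℤ) := by
  obtain ⟨C, hC, hAC⟩ :=
    exists_mul_eq_sub_sum_single A hcol (Finset.univ.erase κ) (Finset.notMem_erase κ _)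
  refine ⟨C, hC, fun i j hij => ?_⟩
  have hAiκ : ∀ i, (A : Matrix n n ℤ) i κ = (1 : Matrix n n ℤ) i κ := fun i => by
    simpa [one_apply, Pi.single_apply] using congrFun hcol i
  rw [hAC, sub_apply, Matrix.sum_apply]
  rcases eq_or_ne i κ with rfl | hi
  · simp only [single_apply, true_and, Finset.sum_ite_eq', Finset.mem_erase, Finset.mem_univ,
      and_true]
    rcases eq_or_ne j i with rfl | hj
    · simp [hAiκ]
    · simp [hj, one_apply_ne' hj]
  · simp only [single_apply, hi.symm, false_and, if_false, Finset.sum_const_zero, sub_zero]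
    rcases hij with hi' | hj
    · exact hA i j (.inl (by simpa [hi] using hi'))
    · rcases Set.mem_insert_iff.mp hj with rfl | hj
      · exact hAiκ i
      · exact hA i j (.inr hj)

theorem exists_mul_mul_isOneOn_insert (A : GL n ℤ) (hA : IsOneOn s (A : Matrix n n ℤ)) {κ : n}
    (hκ : κ ∉ s) : ∃ B ∈ Subgroup.closure (elementaryGenerators n),
      ∃ C ∈ Subgroup.closure (elementaryGenerators n),
        IsOneOn (insert κ s) ((B * A * C : GL n ℤ) : Matrix n n ℤ) := by
  obtain ⟨B, hB, hBA, hcol⟩ := exists_mul_col_eq_single_one A hA hκ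
  obtain ⟨C, hC, hBAC⟩ := exists_mul_isOneOn_insert (B * A) hBA hcol
  exact ⟨B, hB.1, C, hC, hBAC⟩

theorem mem_closure_of_isOneOn_compl (t : Finset n) (A : GL n ℤ)
    (hA : IsOneOn (↑tᶜ : Set n) (A : Matrix n n ℤ)) :
    A ∈ Subgroup.closure (elementaryGenerators n) := by
  induction t using Finset.induction_on generalizing A with
  | empty =>
    rw [Finset.compl_empty, Finset.coe_univ] at hA
    have hA1 : A = 1 := Units.ext hA.eq_one_of_univ
    exact hA1 ▸ one_mem _
  | insert κ t hκt ih =>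
    obtain ⟨B, hB, C, hC, hBAC⟩ :=
      exists_mul_mul_isOneOn_insert A hA (by simp : κ ∉ (↑(insert κ t)ᶜ : Set n))
    rw [← Finset.coe_insert, Finset.insert_compl_insert hκt] at hBAC
    have hA' : A = B⁻¹ * (B * A * C) * C⁻¹ := by group
    rw [hA']
    exact mul_mem (mul_mem (inv_mem hB) (ih _ hBAC)) (inv_mem hC)

theorem closure_elementaryGenerators : Subgroup.closure (elementaryGenerators n) = ⊤ :=
  eq_top_iff.mpr fun A _ => mem_closure_of_isOneOn_compl Finset.univ A fun i j h => by simp at h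

end Matrix.GeneralLinearGroup

theorem stmt_14_general (N : ℕ) :
    ∃ S : Set (GL (Fin N) ℤ), S.Finite ∧ Subgroup.closure S = ⊤ :=
  ⟨_, Matrix.GeneralLinearGroup.finite_elementaryGenerators,
    Matrix.GeneralLinearGroup.closure_elementaryGenerators⟩

/-- For every positive `N`, the group `GL_N(ℤ)` is finitely generated:
there is a finite subset `S` of `GL_N(ℤ)` generating the whole group. -/
theorem stmt_14 (N : ℕ) (hN : 0 < N) :
    ∃ S : Set (GL (Fin N) ℤ), S.Finite ∧ Subgroup.closure S = ⊤ :=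
  stmt_14_general N
end
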